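/- Let N be a natural number and p, λ, β real numbers with 1 < p < N, λ > 0, β > 0. Let φ, g : ℝ → ℝ with φ continuously differentiable on [1,∞), φ(r) > 0 for all r ≥ 1, g continuous on [1,∞) with g(r) > 0 for all r ≥ 1, F satisfying the radial eigenvalue ODE on (1,∞), the Robin condition φ'(1) = β^(1/(p−1))·φ(1), and r_* > 1 with φ'(r_*) = 0. Then for every real m > 0 such that g(s) ≥ m for all s ∈ [1, r_*], one has r_*^N ≤ 1 + N·β/(λ·m). -/

import Mathlib

/-!
With `F` the radial quantity and `c = λ m φ(1)^(p-1)`, the function `F(r) + c r^N / N` has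
derivative `r^(N-1) (c - λ g φ^(p-1))`. Taking `c = 0`, `F` is antitone on `[1, r_*]` and
vanishes at `r_*`, so `φ' ≥ 0` there and `φ ≥ φ(1)`; then `g ≥ m` makes the derivative
nonpositive for the full `c`, and comparing the endpoint values `F(1) = β φ(1)^(p-1)` (Robin)
and `F(r_*) = 0` gives `c (r_*^N - 1) / N ≤ β φ(1)^(p-1)`.
-/

open Real Set

/-- The radial quantity `F(r) = r^(N-1) |φ'(r)|^(p-2) φ'(r)`, written with
real exponents via the sign function. -/
noncomputable def radialF (N : ℕ) (p : ℝ) (φ : ℝ → ℝ) (r : ℝ) : ℝ :=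
  r ^ ((N : ℝ) - 1) * Real.sign (deriv φ r) * |deriv φ r| ^ (p - 1)

lemma sign_mul_abs_rpow_eq_ite (q : ℝ) (hq : 0 < q) (x : ℝ) :
    Real.sign x * |x| ^ q = if x ≤ 0 then -|x| ^ q else |x| ^ q := by
  rcases lt_trichotomy x 0 with hx | rfl | hx
  · simp [Real.sign_of_neg hx, hx.le]
  · simp [Real.zero_rpow hq.ne']
  · simp [Real.sign_of_pos hx, hx.not_ge]

lemma continuous_sign_mul_abs_rpow {q : ℝ} (hq : 0 < q) :
    Continuous fun x : ℝ => Real.sign x * |x| ^ q := by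
  simp_rw [sign_mul_abs_rpow_eq_ite q hq]
  have hpow : Continuous fun x : ℝ => |x| ^ q :=
    continuous_abs.rpow_const fun _ => Or.inr hq.le
  exact hpow.neg.if_le hpow continuous_id continuous_const fun x hx => by
    simp [show x = 0 from hx, Real.zero_rpow hq.ne']

lemma sign_mul_abs_rpow_nonneg_iff (q : ℝ) {x : ℝ} : 0 ≤ Real.sign x * |x| ^ q ↔ 0 ≤ x := by
  rcases lt_trichotomy x 0 with hx | rfl | hx
  · simpa [Real.sign_of_neg hx, hx.not_ge] using Real.rpow_pos_of_pos (abs_pos.2 hx.ne) q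
  · simp
  · simpa [Real.sign_of_pos hx, hx.le] using Real.rpow_nonneg (abs_nonneg x) q

section radialF

variable {N : ℕ} {p : ℝ} {φ : ℝ → ℝ}

lemma radialF_eq_mul (r : ℝ) :
    radialF N p φ r = r ^ ((N : ℝ) - 1) * (Real.sign (deriv φ r) * |deriv φ r| ^ (p - 1)) :=
  mul_assoc _ _ _

lemma continuousOn_radialF (hp : 1 < p) {s : Set ℝ} (hφ' : ContinuousOn (deriv φ) s)
    (hs : 0 ∉ s) : ContinuousOn (radialF N p φ) s := by
  simp_rw [funext radialF_eq_mul]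
  refine ContinuousOn.mul (fun r hr => ?_)
    ((continuous_sign_mul_abs_rpow (by linarith)).comp_continuousOn hφ')
  exact (Real.continuousAt_rpow_const r _
    (Or.inl (ne_of_mem_of_not_mem hr hs))).continuousWithinAt

lemma radialF_nonneg_iff {r : ℝ} (hr : 0 < r) : 0 ≤ radialF N p φ r ↔ 0 ≤ deriv φ r := by
  rw [radialF_eq_mul, mul_nonneg_iff_of_pos_left (Real.rpow_pos_of_pos hr _),
    sign_mul_abs_rpow_nonneg_iff]

lemma radialF_of_deriv_eq_zero {r : ℝ} (h : deriv φ r = 0) : radialF N p φ r = 0 := by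
  simp [radialF, h]

lemma radialF_one_of_robin {β : ℝ} (hp : 1 < p) (hβ : 0 < β) (hφ1 : 0 < φ 1)
    (hRobin : deriv φ 1 = β ^ (1 / (p - 1)) * φ 1) : radialF N p φ 1 = β * φ 1 ^ (p - 1) := by
  have hd : 0 < deriv φ 1 := hRobin ▸ mul_pos (Real.rpow_pos_of_pos hβ _) hφ1
  have hβpow : (β ^ (1 / (p - 1))) ^ (p - 1) = β := by
    rw [← Real.rpow_mul hβ.le, one_div_mul_cancel (by linarith), Real.rpow_one]
  rw [radialF, Real.one_rpow, Real.sign_of_pos hd, abs_of_pos hd, one_mul, one_mul,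
    hRobin, Real.mul_rpow (Real.rpow_nonneg hβ.le _) hφ1.le, hβpow]

lemma monotoneOn_of_radialF_nonneg {a b : ℝ} (ha : 0 < a)
    (hφ : ∀ r ∈ Icc a b, DifferentiableAt ℝ φ r) (hF : ∀ r ∈ Icc a b, 0 ≤ radialF N p φ r) :
    MonotoneOn φ (Icc a b) := by
  refine monotoneOn_of_deriv_nonneg (convex_Icc a b)
    (fun r hr => (hφ r hr).continuousAt.continuousWithinAt)
    (fun r hr => (hφ r (interior_subset hr)).differentiableWithinAt) fun r hr => ?_
  have hr' := interior_subset hr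
  exact (radialF_nonneg_iff (ha.trans_le hr'.1)).1 (hF r hr')

end radialF

lemma antitoneOn_add_mul_rpow {F h : ℝ → ℝ} {N a b c : ℝ} (hN : N ≠ 0) (ha : 0 < a)
    (hF : ContinuousOn F (Icc a b))
    (hF' : ∀ r ∈ Ioo a b, HasDerivAt F (-(r ^ (N - 1) * h r)) r)
    (hc : ∀ r ∈ Ioo a b, c ≤ h r) :
    AntitoneOn (fun r => F r + c * r ^ N / N) (Icc a b) := by
  have hpos : ∀ r ∈ Icc a b, 0 < r := fun r hr => ha.trans_le hr.1
  refine antitoneOn_of_hasDerivWithinAt_nonpos (convex_Icc a b)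
    (f' := fun r => -(r ^ (N - 1) * h r) + c * r ^ (N - 1))
    (hF.add fun r hr => ((Real.continuousAt_rpow_const r N
      (Or.inl (hpos r hr).ne')).continuousWithinAt.const_mul c).div_const N) (fun r hr => ?_)
    fun r hr => ?_ <;> rw [interior_Icc] at hr
  · have hpow := Real.hasDerivAt_rpow_const (p := N)
      (Or.inl (hpos r (Ioo_subset_Icc_self hr)).ne')
    refine ((hF' r hr).add ((hpow.const_mul c).div_const N)).hasDerivWithinAt.congr_deriv ?_
    field_simp
  · have := mul_le_mul_of_nonneg_left (hc r hr)
      (Real.rpow_nonneg (hpos r (Ioo_subset_Icc_self hr)).le (N - 1))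
    linarith

theorem critical_radius_upper_general (N : ℕ) (p lam β : ℝ)
    (hp : 1 < p) (hpN : p < N) (hlam : 0 < lam) (hβ : 0 < β)
    (φ g : ℝ → ℝ)
    (hφdiff : ∀ r ≥ (1 : ℝ), DifferentiableAt ℝ φ r)
    (hφC1 : ContinuousOn (deriv φ) (Set.Ici 1))
    (hφpos : ∀ r ≥ (1 : ℝ), 0 < φ r)
    (hODE : ∀ r > (1 : ℝ),
      HasDerivAt (radialF N p φ) (-(lam * r ^ ((N : ℝ) - 1) * g r * φ r ^ (p - 1))) r)
    (hRobin : deriv φ 1 = β ^ (1 / (p - 1)) * φ 1)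
    (rstar : ℝ) (hrstar : 1 < rstar) (hcrit : deriv φ rstar = 0) :
    ∀ m > (0 : ℝ), (∀ s ∈ Set.Icc (1 : ℝ) rstar, m ≤ g s) →
      rstar ^ (N : ℝ) ≤ 1 + (N : ℝ) * β / (lam * m) := by
  intro m hm hgm
  have hN : (0 : ℝ) < N := by linarith
  have hφ1 : 0 < φ 1 := hφpos 1 le_rfl
  have hFc : ContinuousOn (radialF N p φ) (Icc 1 rstar) :=
    continuousOn_radialF hp (hφC1.mono Icc_subset_Ici_self) fun h => by linarith [h.1]
  have hF' : ∀ r ∈ Ioo 1 rstar, HasDerivAt (radialF N p φ)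
      (-(r ^ ((N : ℝ) - 1) * (lam * g r * φ r ^ (p - 1)))) r :=
    fun r hr => (hODE r hr.1).congr_deriv (by ring)
  have hF_nonneg : ∀ r ∈ Icc 1 rstar, 0 ≤ radialF N p φ r := fun r hr => by
    have hanti := antitoneOn_add_mul_rpow hN.ne' one_pos hFc hF' (c := 0) fun s hs =>
      mul_nonneg (mul_nonneg hlam.le ((hm.trans_le (hgm s (Ioo_subset_Icc_self hs))).le))
        (Real.rpow_nonneg (hφpos s hs.1.le).le _)
    simpa [radialF_of_deriv_eq_zero hcrit] using hanti hr (right_mem_Icc.2 hrstar.le) hr.2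
  have hφ_mono : MonotoneOn φ (Icc 1 rstar) :=
    monotoneOn_of_radialF_nonneg one_pos (fun r hr => hφdiff r hr.1) hF_nonneg
  have hG := antitoneOn_add_mul_rpow hN.ne' one_pos hFc hF' (c := lam * m * φ 1 ^ (p - 1))
    fun s hs => by
      have hs' := Ioo_subset_Icc_self hs
      have hg := hgm s hs'
      have hφs := hφ_mono (left_mem_Icc.2 hrstar.le) hs' hs'.1
      gcongr
      exact mul_nonneg hlam.le (hm.le.trans hg)
  have key := hG (left_mem_Icc.2 hrstar.le) (right_mem_Icc.2 hrstar.le) hrstar.le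
  simp only at key
  rw [radialF_one_of_robin hp hβ hφ1 hRobin, radialF_of_deriv_eq_zero hcrit,
    Real.one_rpow] at key
  have hP : 0 < φ 1 ^ (p - 1) := Real.rpow_pos_of_pos hφ1 _
  have hscaled :
      lam * m * (rstar ^ (N : ℝ) - 1) * φ 1 ^ (p - 1) ≤ N * β * φ 1 ^ (p - 1) := by
    field_simp at key
    linarith
  rw [← sub_le_iff_le_add', le_div_iff₀ (mul_pos hlam hm)]
  linarith [le_of_mul_le_mul_right hscaled hP]

/-- Upper bound on the critical radius `r_*` in Theorem 1.4(b):
`r_*^N ≤ 1 + Nβ/(λ m)` whenever `g ≥ m > 0` on `[1, r_*]`. -/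
theorem critical_radius_upper (N : ℕ) (p lam β : ℝ)
    (hp : 1 < p) (hpN : p < N) (hlam : 0 < lam) (hβ : 0 < β)
    (φ g : ℝ → ℝ)
    (hφdiff : ∀ r ≥ (1 : ℝ), DifferentiableAt ℝ φ r)
    (hφC1 : ContinuousOn (deriv φ) (Set.Ici 1))
    (hφpos : ∀ r ≥ (1 : ℝ), 0 < φ r)
    (hgcont : ContinuousOn g (Set.Ici 1))
    (hgpos : ∀ r ≥ (1 : ℝ), 0 < g r)
    (hODE : ∀ r > (1 : ℝ),
      HasDerivAt (radialF N p φ) (-(lam * r ^ ((N : ℝ) - 1) * g r * φ r ^ (p - 1))) r)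
    (hRobin : deriv φ 1 = β ^ (1 / (p - 1)) * φ 1)
    (rstar : ℝ) (hrstar : 1 < rstar) (hcrit : deriv φ rstar = 0) :
    ∀ m > (0 : ℝ), (∀ s ∈ Set.Icc (1 : ℝ) rstar, m ≤ g s) →
      rstar ^ (N : ℝ) ≤ 1 + (N : ℝ) * β / (lam * m) :=
  critical_radius_upper_general N p lam β hp hpN hlam hβ φ g hφdiff hφC1 hφpos hODE hRobin rstar
    hrstar hcrit
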